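/- Let K(x, x') = Σ_{i=1}^∞ λ_i e_i(x) e_i(x') be a Mercer kernel with eigenvalues λ_1 ≥ λ_2 ≥ ⋯ ≥ 0 and orthonormal eigenfunctions e_i on a probability space X. For any n points x_1, …, x_n ∈ X with K_n = [K(x_i, x_j)] invertible, the integrated conditional variance satisfies ∫_X [K(x, x) − k(x)^T K_n^{-1} k(x)] dx ≥ Σ_{i=n+1}^∞ λ_i, where k(x) = (K(x, x_1), …, K(x, x_n))^T. Equivalently, the variance reduction ratio (∫K(x,x)dx − ∫ conditional variance dx)/(∫K(x,x)dx) is at most (Σ_{i=1}^n λ_i)/(Σ_{i=1}^∞ λ_i). -/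

import Mathlib

/-!
Write `φⱼ = (eⱼ(x₁), …, eⱼ(xₙ))`. The Mercer expansion gives `Kₙ = ∑ λⱼ φⱼ φⱼᵀ` and
`∫ k kᵀ dμ = ∑ λⱼ² φⱼ φⱼᵀ` (orthonormality kills the cross terms), so the integrated variance
reduction `∫ kᵀ Kₙ⁻¹ k dμ` equals `∑ λⱼ tⱼ` with the leverage scores `tⱼ = λⱼ φⱼᵀ Kₙ⁻¹ φⱼ`.
These lie in `[0, 1]` and sum to `tr (Kₙ⁻¹ Kₙ) = n`; since `λ` is decreasing, `∑ λⱼ tⱼ` is at most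
`λ₁ + ⋯ + λₙ`, whereas `∫ K(x, x) dμ = ∑ λⱼ`.
-/

open MeasureTheory Matrix

theorem abs_mul_le_add_mul_self_div_two (a b : ℝ) : |a * b| ≤ (a * a + b * b) / 2 := by
  rw [abs_mul]
  nlinarith [two_mul_le_add_sq |a| |b|, sq_abs a, sq_abs b]

theorem summable_mul_mul_of_summable_mul_self {l f g : ℕ → ℝ} (hl : ∀ j, 0 ≤ l j)
    (hf : Summable fun j => l j * f j * f j) (hg : Summable fun j => l j * g j * g j) :
    Summable fun j => l j * f j * g j := by
  refine ((hf.add hg).div_const 2).of_norm_bounded fun j => ?_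
  rw [Real.norm_eq_abs, mul_assoc, abs_mul, abs_of_nonneg (hl j)]
  nlinarith [mul_le_mul_of_nonneg_left (abs_mul_le_add_mul_self_div_two (f j) (g j)) (hl j)]

open Finset in
theorem Antitone.tsum_mul_le_sum_range {l t : ℕ → ℝ} (hl : Antitone l) (hl0 : ∀ i, 0 ≤ l i)
    (hls : Summable l) (ht0 : ∀ i, 0 ≤ t i) (ht1 : ∀ i, t i ≤ 1) {n : ℕ} (ht : HasSum t n) :
    ∑' i, l i * t i ≤ ∑ i ∈ range n, l i := by
  set s : ℕ → ℝ := fun i => if i < n then 1 else 0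
  have hs (f : ℕ → ℝ) : HasSum (fun i => f i * s i) (∑ i ∈ range n, f i) := by
    have : ∑ i ∈ range n, f i * s i = ∑ i ∈ range n, f i :=
      sum_congr rfl fun i hi => by simp [s, mem_range.mp hi]
    rw [← this]
    exact hasSum_sum_of_ne_finset_zero fun i hi => by simp [s, show ¬ i < n by simpa using hi]
  have hlt : HasSum (fun i => l i * t i) (∑' i, l i * t i) :=
    (hls.of_nonneg_of_le (fun i => mul_nonneg (hl0 i) (ht0 i))
      fun i => mul_le_of_le_one_right (hl0 i) (ht1 i)).hasSum
  -- Each term of `∑ (l i - l n) (t i - s i)` is nonpositive, and `∑ (t i - s i) = n - n`.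
  have hts : HasSum (fun i => t i - s i) (n - n) := ht.sub (by simpa using hs 1)
  have key := hasSum_le (fun i => ?_) ((hlt.sub (hs l)).sub (hts.mul_left (l n))) hasSum_zero
  · simpa using key
  · have : (l i - l n) * (t i - s i) ≤ 0 := by
      rcases lt_or_ge i n with h | h
      · exact mul_nonpos_of_nonneg_of_nonpos (sub_nonneg.2 (hl h.le)) (by simp [s, h, ht1 i])
      · exact mul_nonpos_of_nonpos_of_nonneg (sub_nonpos.2 (hl h)) (by simp [s, h.not_gt, ht0 i])
    linarith

namespace Matrix

variable {ι : Type*} {c : ℕ → ℝ} {φ : ℕ → ι → ℝ}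

theorem hasSum_smul_vecMulVec (hc : ∀ j, 0 ≤ c j)
    (hφ : ∀ a, Summable fun j => c j * φ j a * φ j a) :
    HasSum (fun j => c j • vecMulVec (φ j) (φ j)) (of fun a b => ∑' j, c j * φ j a * φ j b) :=
  Pi.hasSum.2 fun a => Pi.hasSum.2 fun b => by
    simpa [vecMulVec, mul_assoc]
      using (summable_mul_mul_of_summable_mul_self hc (hφ a) (hφ b)).hasSum

variable [Fintype ι] {A : Matrix ι ι ℝ}

theorem hasSum_dotProduct_mulVec_of_hasSum_vecMulVec
    (hA : HasSum (fun j => c j • vecMulVec (φ j) (φ j)) A) (B : Matrix ι ι ℝ) :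
    HasSum (fun j => c j * (φ j ⬝ᵥ (B *ᵥ φ j))) (trace (B * A)) := by
  convert hA.map ((traceAddMonoidHom ι ℝ).comp (AddMonoidHom.mulLeft B))
    (continuous_const.matrix_mul continuous_id).matrix_trace using 1
  · ext j
    simp [mul_vecMulVec, dotProduct_comm]
  · rfl

theorem hasSum_sq_dotProduct_of_hasSum_vecMulVec
    (hA : HasSum (fun j => c j • vecMulVec (φ j) (φ j)) A) (w : ι → ℝ) :
    HasSum (fun j => c j * (φ j ⬝ᵥ w) ^ 2) (w ⬝ᵥ (A *ᵥ w)) := by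
  convert hA.map (AddMonoidHom.mk' (fun M : Matrix ι ι ℝ => w ⬝ᵥ (M *ᵥ w))
    fun M N => by simp [add_mulVec, dotProduct_add])
    (continuous_const.dotProduct (continuous_id.matrix_mulVec continuous_const)) using 1
  · ext j
    simp only [Function.comp_apply, AddMonoidHom.mk'_apply, smul_mulVec, vecMulVec_mulVec]
    rw [op_smul_eq_smul, dotProduct_smul, dotProduct_smul, smul_eq_mul, smul_eq_mul,
      dotProduct_comm w]
    ring
  · rfl

variable [DecidableEq ι]

noncomputable def leverage (A : Matrix ι ι ℝ) (v : ι → ℝ) : ℝ := v ⬝ᵥ (A⁻¹ *ᵥ v)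

theorem hasSum_mul_leverage (hA : HasSum (fun j => c j • vecMulVec (φ j) (φ j)) A)
    (hdet : IsUnit A.det) : HasSum (fun j => c j * leverage A (φ j)) (Fintype.card ι) := by
  simpa [nonsing_inv_mul _ hdet, leverage]
    using hasSum_dotProduct_mulVec_of_hasSum_vecMulVec hA A⁻¹

theorem mul_leverage_mem_Icc (hc : ∀ j, 0 ≤ c j)
    (hA : HasSum (fun j => c j • vecMulVec (φ j) (φ j)) A) (hdet : IsUnit A.det) (j : ℕ) :
    c j * leverage A (φ j) ∈ Set.Icc 0 1 := by
  -- With `w = A⁻¹ φⱼ` and `q` the leverage: `cⱼ q² ≤ ∑ cᵢ (φᵢ ⬝ w)² = w ⬝ A w = q`.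
  set w := A⁻¹ *ᵥ φ j
  have hq : HasSum (fun i => c i * (φ i ⬝ᵥ w) ^ 2) (leverage A (φ j)) := by
    convert hasSum_sq_dotProduct_of_hasSum_vecMulVec hA w using 1
    rw [mulVec_mulVec, mul_nonsing_inv _ hdet, one_mulVec, dotProduct_comm]
    rfl
  have hq0 : 0 ≤ leverage A (φ j) := hq.nonneg fun i => mul_nonneg (hc i) (sq_nonneg _)
  have hjq : c j * leverage A (φ j) ^ 2 ≤ leverage A (φ j) :=
    le_hasSum hq j fun i _ => mul_nonneg (hc i) (sq_nonneg _)
  refine ⟨mul_nonneg (hc j) hq0, ?_⟩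
  rcases hq0.eq_or_lt with h | h
  · simp [← h]
  · exact le_of_mul_le_mul_right (by nlinarith) h

end Matrix

theorem Continuous.integrable_of_compactSpace {X E : Type*} [TopologicalSpace X] [CompactSpace X]
    [MeasurableSpace X] [OpensMeasurableSpace X] {μ : Measure X} [IsFiniteMeasure μ]
    [NormedAddCommGroup E] {f : X → E} (hf : Continuous f) : Integrable f μ :=
  hf.integrable_of_hasCompactSupport (.of_compactSpace f)

section Integral

variable {X : Type*} [MeasurableSpace X] {μ : Measure X}

theorem MeasureTheory.integral_dotProduct_mulVec {ι : Type*} [Fintype ι] (B : Matrix ι ι ℝ)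
    {f : X → ι → ℝ} (hf : ∀ a b, Integrable (fun v => f v a * f v b) μ) :
    ∫ v, f v ⬝ᵥ (B *ᵥ f v) ∂μ = trace (B * of fun a b => ∫ v, f v a * f v b ∂μ) := by
  have h v : f v ⬝ᵥ (B *ᵥ f v) = ∑ a, ∑ b, B a b * (f v b * f v a) := by
    simp only [dotProduct, mulVec, Finset.mul_sum]
    exact Finset.sum_congr rfl fun a _ => Finset.sum_congr rfl fun b _ => by ring
  simp_rw [h]
  rw [integral_finsetSum (f := fun a v => ∑ b, B a b * (f v b * f v a)) _
    fun a _ => integrable_finsetSum _ fun b _ => (hf b a).const_mul _]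
  refine Finset.sum_congr rfl fun a _ => ?_
  rw [integral_finsetSum (f := fun b v => B a b * (f v b * f v a)) _
    fun b _ => (hf b a).const_mul _]
  simp only [diag_apply, mul_apply, of_apply, integral_const_mul]

theorem MeasureTheory.integrable_mul_self_of_integral_eq_one {f : X → ℝ}
    (hf : ∫ v, f v * f v ∂μ = 1) : Integrable (fun v => f v * f v) μ :=
  Integrable.of_integral_ne_zero (by simp [hf])

theorem MeasureTheory.memLp_two_of_integral_mul_self_eq_one {f : X → ℝ}
    (hm : AEStronglyMeasurable f μ) (hf : ∫ v, f v * f v ∂μ = 1) : MemLp f 2 μ :=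
  (memLp_two_iff_integrable_sq hm).2 <| by
    simpa [sq] using integrable_mul_self_of_integral_eq_one hf

theorem MeasureTheory.eLpNorm_two_eq_one_of_integral_mul_self_eq_one {f : X → ℝ}
    (hm : AEStronglyMeasurable f μ) (hf : ∫ v, f v * f v ∂μ = 1) : eLpNorm f 2 μ = 1 := by
  rw [(memLp_two_of_integral_mul_self_eq_one hm hf).eLpNorm_eq_integral_rpow_norm two_ne_zero
    ENNReal.ofNat_ne_top]
  simp [sq, hf]

theorem MeasureTheory.integral_abs_mul_le_one {f g : X → ℝ}
    (hfg : Integrable (fun v => f v * g v) μ) (hf : ∫ v, f v * f v ∂μ = 1)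
    (hg : ∫ v, g v * g v ∂μ = 1) :
    ∫ v, |f v * g v| ∂μ ≤ 1 := by
  have hf' := integrable_mul_self_of_integral_eq_one hf
  have hg' := integrable_mul_self_of_integral_eq_one hg
  calc ∫ v, |f v * g v| ∂μ ≤ ∫ v, (f v * f v + g v * g v) / 2 ∂μ :=
        integral_mono hfg.abs ((hf'.add hg').div_const 2)
          fun v => abs_mul_le_add_mul_self_div_two _ _
    _ = 1 := by rw [integral_div, integral_add hf' hg', hf, hg]; norm_num

variable {e : ℕ → X → ℝ}

theorem MeasureTheory.ae_summable_norm_mul_of_integral_mul_self_eq_one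
    (hm : ∀ i, AEStronglyMeasurable (e i) μ) (he : ∀ i, ∫ v, e i v * e i v ∂μ = 1)
    {α : ℕ → ℝ} (hα : Summable fun i => |α i|) :
    ∀ᵐ v ∂μ, Summable fun i => ‖α i * e i v‖ := by
  refine summable_norm_of_tsum_eLpNorm_ne_top one_le_two (fun i => (hm i).const_mul (α i)) ?_
  have h i : eLpNorm (fun v => α i * e i v) 2 μ = ENNReal.ofReal |α i| := by
    have : (fun v => α i * e i v) = α i • e i := rfl
    rw [this, eLpNorm_const_smul, eLpNorm_two_eq_one_of_integral_mul_self_eq_one (hm i) (he i),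
      mul_one, Real.enorm_eq_ofReal_abs]
  simp_rw [h, ← ENNReal.ofReal_tsum_of_nonneg (fun i => abs_nonneg _) hα]
  exact ENNReal.ofReal_ne_top

theorem MeasureTheory.hasSum_integral_tsum_mul_tsum_of_orthonormal
    (hm : ∀ i, AEStronglyMeasurable (e i) μ)
    (horth : ∀ i j, ∫ v, e i v * e j v ∂μ = if i = j then 1 else 0)
    {α β : ℕ → ℝ} (hα : Summable fun i => |α i|) (hβ : Summable fun i => |β i|) :
    HasSum (fun i => α i * β i) (∫ v, (∑' i, α i * e i v) * ∑' j, β j * e j v ∂μ) := by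
  have he i : ∫ v, e i v * e i v ∂μ = 1 := by simpa using horth i i
  have hint i j : Integrable (fun v => e i v * e j v) μ :=
    (memLp_two_of_integral_mul_self_eq_one (hm i) (he i)).integrable_mul
      (memLp_two_of_integral_mul_self_eq_one (hm j) (he j))
  set F : ℕ × ℕ → X → ℝ := fun p v => α p.1 * β p.2 * (e p.1 v * e p.2 v)
  have hF : HasSum (fun p => ∫ v, F p v ∂μ) (∫ v, ∑' p, F p v ∂μ) := by
    refine hasSum_integral_of_summable_integral_norm (fun p => (hint _ _).const_mul _) ?_
    refine (hα.mul_of_nonneg hβ (fun _ => abs_nonneg _) (fun _ => abs_nonneg _)).of_nonneg_of_le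
      (fun p => integral_nonneg fun v => norm_nonneg _) fun p => ?_
    simp_rw [F, Real.norm_eq_abs, abs_mul (α p.1 * β p.2), abs_mul (α p.1)]
    rw [integral_const_mul]
    exact mul_le_of_le_one_right (by positivity)
      (integral_abs_mul_le_one (hint _ _) (he _) (he _))
  have hpt : ∀ᵐ v ∂μ, (∑' i, α i * e i v) * ∑' j, β j * e j v = ∑' p, F p v := by
    filter_upwards [ae_summable_norm_mul_of_integral_mul_self_eq_one hm he hα,
      ae_summable_norm_mul_of_integral_mul_self_eq_one hm he hβ] with v hv₁ hv₂
    rw [tsum_mul_tsum_of_summable_norm hv₁ hv₂]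
    exact tsum_congr fun p => by ring
  have hoff : ∀ p ∉ Set.range fun i => (i, i), ∫ v, F p v ∂μ = 0 := by
    rintro ⟨i, j⟩ hij
    have : i ≠ j := fun h => hij ⟨i, by rw [h]⟩
    simp [F, integral_const_mul, horth, this]
  rw [integral_congr_ae hpt]
  convert (Function.Injective.hasSum_iff (fun i j h => (Prod.mk.inj h).1) hoff).2 hF using 1
  ext i
  simp [F, integral_const_mul, he]

theorem MeasureTheory.hasSum_integral_tsum_mul_mul_self (he : ∀ i, ∫ v, e i v * e i v ∂μ = 1)
    {c : ℕ → ℝ} (hc : Summable fun i => |c i|) :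
    HasSum c (∫ v, ∑' i, c i * e i v * e i v ∂μ) := by
  have hint i : Integrable (fun v => c i * e i v * e i v) μ := by
    simpa only [mul_assoc] using (integrable_mul_self_of_integral_eq_one (he i)).const_mul (c i)
  have hnorm : Summable fun i => ∫ v, ‖c i * e i v * e i v‖ ∂μ :=
    hc.congr fun i => by simp [mul_assoc, integral_const_mul, he]
  exact (hasSum_integral_of_summable_integral_norm hint hnorm).congr_fun fun i => by
    simp [mul_assoc, integral_const_mul, he]

end Integral

section Kernel

variable {X : Type*} {K : X → X → ℝ}

def kernelMatrix {ι : Type*} (K : X → X → ℝ) (x : ι → X) : Matrix ι ι ℝ :=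
  of fun i j => K (x i) (x j)

theorem posSemidef_kernelMatrix (hsymm : ∀ x x', K x x' = K x' x)
    (hpsd : ∀ (N : ℕ) (x : Fin N → X) (c : Fin N → ℝ), 0 ≤ ∑ i, ∑ j, c i * c j * K (x i) (x j))
    {ι : Type*} [Fintype ι] (x : ι → X) : (kernelMatrix K x).PosSemidef := by
  let σ := Fintype.equivFin ι
  have hfin : (kernelMatrix K (x ∘ σ.symm)).PosSemidef := by
    refine .of_dotProduct_mulVec_nonneg (ext fun i j => hsymm _ _) fun c => ?_
    simpa [kernelMatrix, dotProduct, mulVec, Finset.mul_sum, mul_assoc, mul_comm (K _ _)]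
      using hpsd _ (x ∘ σ.symm) c
  convert hfin.submatrix σ
  ext i j
  simp [kernelMatrix]

theorem sub_dotProduct_mulVec_inv_kernelMatrix_nonneg (hsymm : ∀ x x', K x x' = K x' x)
    (hpsd : ∀ (N : ℕ) (x : Fin N → X) (c : Fin N → ℝ), 0 ≤ ∑ i, ∑ j, c i * c j * K (x i) (x j))
    {ι : Type*} [Fintype ι] [DecidableEq ι] (x : ι → X) (hdet : IsUnit (kernelMatrix K x).det)
    (v : X) : 0 ≤ K v v - (fun i => K v (x i)) ⬝ᵥ ((kernelMatrix K x)⁻¹ *ᵥ fun i => K v (x i)) := by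
  have hA : (kernelMatrix K x).PosDef :=
    (posSemidef_kernelMatrix hsymm hpsd x).posDef_iff_det_ne_zero.2 hdet.ne_zero
  let _ := invertibleOfIsUnitDet _ hdet
  have hblocks : kernelMatrix K (Sum.elim x fun _ : Unit => v) = fromBlocks (kernelMatrix K x)
      (of fun i _ => K (x i) v) (of fun i _ => K (x i) v)ᴴ (of fun _ _ => K v v) := by
    ext (i | i) (j | j) <;> simp [kernelMatrix, hsymm v]
  have hschur := (hA.fromBlocks₁₁ _ (of fun _ _ : Unit => K v v)).1
    (hblocks ▸ posSemidef_kernelMatrix hsymm hpsd _)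
  have h := hschur.diag_nonneg (i := ())
  simp only [conjTranspose_eq_transpose_of_trivial, Matrix.sub_apply, of_apply, mul_apply,
    transpose_apply, Finset.sum_mul, mul_assoc, sub_nonneg] at h
  rw [Finset.sum_comm] at h
  simpa [dotProduct, mulVec, Finset.mul_sum, hsymm v] using h

end Kernel

section Expansion

variable {X : Type*} {K : X → X → ℝ} {l : ℕ → ℝ} {e : ℕ → X → ℝ}

-- `K y y ≠ 0` rules out the junk value `0` of a divergent `tsum`.
theorem summable_of_expansion_ne_zero (hexp : ∀ x x', K x x' = ∑' i, l i * e i x * e i x')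
    {y : X} (hy : K y y ≠ 0) : Summable fun j => l j * e j y * e j y := by
  by_contra h
  exact hy (by rw [hexp, tsum_eq_zero_of_not_summable h])

theorem hasSum_kernelMatrix_of_expansion (hexp : ∀ x x', K x x' = ∑' i, l i * e i x * e i x')
    (hl0 : ∀ i, 0 ≤ l i) {ι : Type*} (x : ι → X)
    (hx : ∀ a, Summable fun j => l j * e j (x a) * e j (x a)) :
    HasSum (fun j => l j • vecMulVec (e j ∘ x) (e j ∘ x)) (kernelMatrix K x) := by
  convert hasSum_smul_vecMulVec (φ := fun j => e j ∘ x) hl0 hx using 1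
  exact ext fun a b => hexp _ _

variable [MeasurableSpace X] {μ : Measure X}

theorem hasSum_integral_diag_of_expansion (he : ∀ i, ∫ v, e i v * e i v ∂μ = 1)
    (hexp : ∀ x x', K x x' = ∑' i, l i * e i x * e i x') (hl : Summable l) :
    HasSum l (∫ v, K v v ∂μ) := by
  simpa only [hexp] using hasSum_integral_tsum_mul_mul_self he hl.abs

theorem hasSum_integral_mul_of_expansion (hm : ∀ i, AEStronglyMeasurable (e i) μ)
    (horth : ∀ i j, ∫ v, e i v * e j v ∂μ = if i = j then 1 else 0)
    (hexp : ∀ x x', K x x' = ∑' i, l i * e i x * e i x') (hl0 : ∀ i, 0 ≤ l i) (hl : Summable l)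
    {y z : X} (hy : Summable fun j => l j * e j y * e j y)
    (hz : Summable fun j => l j * e j z * e j z) :
    HasSum (fun j => l j ^ 2 * (e j y * e j z)) (∫ v, K v y * K v z ∂μ) := by
  have habs {w : X} (hw : Summable fun j => l j * e j w * e j w) :
      Summable fun j => |l j * e j w| := by
    simpa using (summable_mul_mul_of_summable_mul_self hl0 hw (g := fun _ => 1)
      (by simpa using hl)).abs
  convert hasSum_integral_tsum_mul_tsum_of_orthonormal hm horth (habs hy) (habs hz) using 1
  · ext j
    ring
  · simp only [hexp _ y, hexp _ z]
    congr! 4 with v <;> exact funext fun j => by ring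

theorem hasSum_integral_dotProduct_mulVec_of_expansion (hm : ∀ i, AEStronglyMeasurable (e i) μ)
    (horth : ∀ i j, ∫ v, e i v * e j v ∂μ = if i = j then 1 else 0)
    (hexp : ∀ x x', K x x' = ∑' i, l i * e i x * e i x') (hl0 : ∀ i, 0 ≤ l i) (hl : Summable l)
    {ι : Type*} [Fintype ι] (x : ι → X)
    (hx : ∀ a, Summable fun j => l j * e j (x a) * e j (x a))
    (hint : ∀ a b, Integrable (fun v => K v (x a) * K v (x b)) μ) (B : Matrix ι ι ℝ) :
    HasSum (fun j => l j ^ 2 * ((e j ∘ x) ⬝ᵥ (B *ᵥ (e j ∘ x))))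
      (∫ v, (fun i => K v (x i)) ⬝ᵥ (B *ᵥ fun i => K v (x i)) ∂μ) := by
  rw [integral_dotProduct_mulVec B hint]
  refine hasSum_dotProduct_mulVec_of_hasSum_vecMulVec
    (Pi.hasSum.2 fun a => Pi.hasSum.2 fun b => ?_) B
  simpa [vecMulVec] using hasSum_integral_mul_of_expansion hm horth hexp hl0 hl (hx a) (hx b)

end Expansion

/-- Optimal variance reduction bound (Proposition 3.1): for a Mercer kernel
`K(x,x') = ∑ᵢ λᵢ eᵢ(x) eᵢ(x')` on a probability space and any `n` points
`x₁, …, xₙ` with `Kₙ = [K(xᵢ,xⱼ)]` invertible, the integrated conditional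
variance satisfies `∫ (K(x,x) − k(x)ᵀ Kₙ⁻¹ k(x)) dμ ≥ ∑_{i>n} λᵢ`,
i.e. `n` observations can remove at most the top-`n` eigenvalue mass. -/
theorem variance_reduction_bound {X : Type*} [MetricSpace X] [CompactSpace X]
    [MeasurableSpace X] [BorelSpace X] (μ : Measure X) [IsProbabilityMeasure μ]
    (K : X → X → ℝ) (hcont : Continuous fun p : X × X => K p.1 p.2)
    (hsymm : ∀ x x', K x x' = K x' x)
    (hpsd : ∀ (N : ℕ) (x : Fin N → X) (c : Fin N → ℝ),
      0 ≤ ∑ i, ∑ j, c i * c j * K (x i) (x j))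
    (l : ℕ → ℝ) (hmono : Antitone l) (hnonneg : ∀ i, 0 ≤ l i)
    (e : ℕ → X → ℝ) (hmeas : ∀ i, Measurable (e i))
    (horth : ∀ i j, ∫ x, e i x * e j x ∂μ = if i = j then 1 else 0)
    (hexp : ∀ x x', K x x' = ∑' i, l i * e i x * e i x')
    (n : ℕ) (x : Fin n → X)
    (Kn : Matrix (Fin n) (Fin n) ℝ) (hKn : Kn = Matrix.of fun i j => K (x i) (x j))
    (hinv : IsUnit Kn.det) :
    (∑' i : ℕ, l (i + n)) ≤
      ∫ v, (K v v - (fun i => K v (x i)) ⬝ᵥ (Kn⁻¹ *ᵥ fun i => K v (x i))) ∂μ := by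
  obtain rfl : Kn = kernelMatrix K x := hKn
  by_cases hl : Summable l
  swap
  · -- The left side is then the junk value `0` of a divergent `tsum`.
    rw [tsum_eq_zero_of_not_summable fun h => hl ((summable_nat_add_iff n).1 h)]
    exact integral_nonneg (sub_dotProduct_mulVec_inv_kernelMatrix_nonneg hsymm hpsd x hinv)
  have hKn : (kernelMatrix K x).PosDef :=
    (posSemidef_kernelMatrix hsymm hpsd x).posDef_iff_det_ne_zero.2 hinv.ne_zero
  have hx a : Summable fun j => l j * e j (x a) * e j (x a) :=
    summable_of_expansion_ne_zero hexp (hKn.diag_pos (i := a)).ne'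
  have hKsum := hasSum_kernelMatrix_of_expansion hexp hnonneg x hx
  have hKcont y : Continuous fun v => K v y := hcont.comp (continuous_id.prodMk continuous_const)
  have hk : Continuous fun v i => K v (x i) := continuous_pi fun i => hKcont _
  have hquad : HasSum (fun j => l j * (l j * leverage (kernelMatrix K x) (e j ∘ x)))
      (∫ v, (fun i => K v (x i)) ⬝ᵥ ((kernelMatrix K x)⁻¹ *ᵥ fun i => K v (x i)) ∂μ) := by
    simpa [leverage, sq, mul_assoc] using hasSum_integral_dotProduct_mulVec_of_expansion
      (fun i => (hmeas i).aestronglyMeasurable) horth hexp hnonneg hl x hx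
      (fun a b => ((hKcont _).mul (hKcont _)).integrable_of_compactSpace) _
  have hbound := hmono.tsum_mul_le_sum_range hnonneg hl
    (fun j => (mul_leverage_mem_Icc hnonneg hKsum hinv j).1)
    (fun j => (mul_leverage_mem_Icc hnonneg hKsum hinv j).2)
    (by simpa using hasSum_mul_leverage hKsum hinv)
  rw [integral_sub (f := fun v => K v v)
      (hcont.comp (continuous_id.prodMk continuous_id)).integrable_of_compactSpace
      (hk.dotProduct (continuous_const.matrix_mulVec hk)).integrable_of_compactSpace,
    ← (hasSum_integral_diag_of_expansion (fun i => by simpa using horth i i) hexp hl).tsum_eq,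
    ← hquad.tsum_eq]
  linarith [hl.sum_add_tsum_nat_add n]
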